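/- For all natural numbers n, the double sum over integers i, j of binom(2n, n+i) * binom(2n, n+j) * |i - j| equals 2n * binom(4n, 2n). -/

import Mathlib

/-!
Since `C(2n, n + j) = C(2n, n - j)`, replacing `j` by `-j` turns `|i - j|` into `|i + j|`, and
Vandermonde's identity collapses the double sum to `∑ₛ C(4n, s) |s - 2n|`. With
`T s = s C(N, s)` one has `T s - T (s + 1) = (2s - N) C(N, s)`, so for `N = 2m` this sum telescopes
from both ends to `T m + T m = 2m C(2m, m)`.
-/

/-- Binomial coefficient `n.choose k` extended to an integer lower index,
vanishing when `k < 0` (and, as usual, when `k > n`). -/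
def ichoose (n : ℕ) (k : ℤ) : ℤ := if 0 ≤ k then (n.choose k.toNat : ℤ) else 0

open Finset

@[simp]
lemma ichoose_natCast (N a : ℕ) : ichoose N a = N.choose a := by
  simp [ichoose]

lemma ichoose_sub (N : ℕ) (k : ℤ) : ichoose N (N - k) = ichoose N k := by
  unfold ichoose
  split_ifs with h₁ h₂ h₂
  · rw [← Nat.choose_symm (by omega : k.toNat ≤ N)]
    congr 3
    omega
  · simp [Nat.choose_eq_zero_of_lt (by omega : N < (N - k).toNat)]
  · simp [Nat.choose_eq_zero_of_lt (by omega : N < k.toNat)]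
  · rfl

lemma exists_mem_range_of_ichoose_ne_zero {N : ℕ} {k : ℤ} (h : ichoose N k ≠ 0) :
    ∃ a ∈ range (N + 1), (a : ℤ) = k := by
  unfold ichoose at h
  split_ifs at h with hk
  · refine ⟨k.toNat, mem_range.2 ?_, Int.toNat_of_nonneg hk⟩
    by_contra hlt
    exact h (by simp [Nat.choose_eq_zero_of_lt (not_lt.1 hlt)])
  · exact absurd rfl h

lemma finsum_eq_sum_range_of_ichoose (N : ℕ) (c : ℤ) (g : ℤ → ℤ)
    (hg : ∀ i, g i ≠ 0 → ichoose N (c + i) ≠ 0) :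
    ∑ᶠ i, g i = ∑ a ∈ range (N + 1), g (a - c) := by
  have hinj : Set.InjOn (fun a : ℕ => (a : ℤ) - c) (range (N + 1)) := by
    intro a _ b _ h
    simpa using h
  rw [finsum_eq_sum_of_support_subset (s := (range (N + 1)).image fun a : ℕ => (a : ℤ) - c),
    sum_image hinj]
  intro i hi
  obtain ⟨a, ha, hai⟩ := exists_mem_range_of_ichoose_ne_zero (hg i hi)
  exact mem_coe.2 (mem_image.2 ⟨a, ha, by omega⟩)

lemma sum_range_choose_mul_choose_mul {R : Type*} [CommSemiring R] (m n : ℕ) (f : ℕ → R) :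
    ∑ a ∈ range (m + 1), ∑ b ∈ range (n + 1), (m.choose a * n.choose b : R) * f (a + b) =
      ∑ s ∈ range (m + n + 1), ((m + n).choose s : R) * f s := by
  rw [← sum_product', ← sum_fiberwise_of_maps_to (g := fun p : ℕ × ℕ => p.1 + p.2)
    (t := range (m + n + 1)) fun p hp => by simp only [mem_product, mem_range] at hp ⊢; omega]
  refine sum_congr rfl fun s _ => ?_
  rw [sum_congr rfl fun p hp => by rw [(mem_filter.1 hp).2], ← sum_mul, Nat.add_choose_eq]
  push_cast
  congr 1
  refine sum_subset (fun p hp => ?_) fun p hp hnp => ?_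
  · simpa using (mem_filter.1 hp).2
  · simp only [mem_filter, mem_product, mem_range, HasAntidiagonal.mem_antidiagonal] at hp hnp
    rcases Nat.lt_or_ge m p.1 with h | h
    · simp [Nat.choose_eq_zero_of_lt h]
    · simp [Nat.choose_eq_zero_of_lt (show n < p.2 by omega)]

lemma mul_choose_sub_succ_mul_choose_succ (N s : ℕ) :
    (s * N.choose s : ℤ) - (s + 1) * N.choose (s + 1) = (2 * s - N) * N.choose s := by
  rcases Nat.lt_or_ge N s with hs | hs
  · simp [Nat.choose_eq_zero_of_lt hs, Nat.choose_eq_zero_of_lt (hs.trans (Nat.lt_succ_self s))]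
  · have h := Nat.choose_succ_right_eq N s
    zify [hs] at h
    linear_combination -h

lemma sum_range_choose_mul_abs_sub (m : ℕ) :
    ∑ s ∈ range (2 * m + 1), ((2 * m).choose s : ℤ) * |(s : ℤ) - m| =
      m * (2 * m).choose m := by
  set T : ℕ → ℤ := fun s => s * (2 * m).choose s
  have hT (s : ℕ) : T s - T (s + 1) = 2 * (((2 * m).choose s : ℤ) * ((s : ℤ) - m)) := by
    simp only [T]
    push_cast
    rw [mul_choose_sub_succ_mul_choose_succ]
    push_cast
    ring
  have hlower : ∑ s ∈ range m, 2 * (((2 * m).choose s : ℤ) * |(s : ℤ) - m|) = T m := by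
    calc _ = ∑ s ∈ range m, (T (s + 1) - T s) := sum_congr rfl fun s hs => by
            rw [abs_of_nonpos (by simp at hs; omega), ← neg_sub (T s), hT]
            ring
      _ = T m := by rw [sum_range_sub T]; simp [T]
  have hupper : ∑ k ∈ range (m + 1), 2 * (((2 * m).choose (m + k) : ℤ) * |((m + k : ℕ) : ℤ) - m|)
      = T m := by
    calc _ = ∑ k ∈ range (m + 1), (T (m + k) - T (m + k + 1)) := sum_congr rfl fun k _ => by
            rw [abs_of_nonneg (by omega), hT]
      _ = T m := by
            refine (sum_range_sub' (fun k => T (m + k)) (m + 1)).trans ?_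
            simp [T, Nat.choose_eq_zero_of_lt (show 2 * m < m + (m + 1) by omega)]
  have h := sum_range_add (fun s => 2 * (((2 * m).choose s : ℤ) * |(s : ℤ) - m|)) m (m + 1)
  rw [show m + (m + 1) = 2 * m + 1 by ring, ← mul_sum, hlower, hupper] at h
  simp only [T] at h
  linarith

theorem stmt12 (n : ℕ) :
    ∑ᶠ i : ℤ, ∑ᶠ j : ℤ,
        ichoose (2 * n) (n + i) * ichoose (2 * n) (n + j) * |i - j|
      = 2 * n * ((4 * n).choose (2 * n) : ℤ) := by
  have hsymm (j : ℤ) : ichoose (2 * n) (n + -j) = ichoose (2 * n) (n + j) := by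
    rw [← ichoose_sub]
    congr 1
    push_cast
    ring
  have hreflect (i : ℤ) :
      ∑ᶠ j : ℤ, ichoose (2 * n) (n + i) * ichoose (2 * n) (n + j) * |i - j| =
        ∑ᶠ j : ℤ, ichoose (2 * n) (n + i) * ichoose (2 * n) (n + j) * |i + j| := by
    rw [← finsum_comp_equiv (Equiv.neg ℤ)]
    simp only [Equiv.neg_apply, hsymm, sub_neg_eq_add]
  simp_rw [hreflect]
  have hinner (a : ℕ) :
      ∑ᶠ j : ℤ, ichoose (2 * n) (n + (a - n)) * ichoose (2 * n) (n + j) * |a - n + j| =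
        ∑ b ∈ range (2 * n + 1),
          ((2 * n).choose a * (2 * n).choose b : ℤ) * |((a + b : ℕ) : ℤ) - (2 * n : ℕ)| := by
    rw [finsum_eq_sum_range_of_ichoose (2 * n) n _
      fun j hj => right_ne_zero_of_mul (left_ne_zero_of_mul hj)]
    refine sum_congr rfl fun b _ => ?_
    simp only [add_sub_cancel, ichoose_natCast]
    push_cast
    congr 2
    ring
  rw [finsum_eq_sum_range_of_ichoose (2 * n) n _ fun i hi => ?_]
  · rw [sum_congr rfl fun a _ => hinner a,
      sum_range_choose_mul_choose_mul _ _ fun s => |(s : ℤ) - (2 * n : ℕ)|,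
      ← two_mul, sum_range_choose_mul_abs_sub, show 2 * (2 * n) = 4 * n by ring]
    push_cast
    ring
  · contrapose! hi
    simp [hi]
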